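/- Let Σ be a K×K symmetric positive-definite matrix with Σ⁻¹ having non-positive off-diagonal entries, and α ∈ ℝ^K strictly positive. Define V(q) = αᵀ(Σ⁻¹ + diag(q))⁻¹α. Then for every q ∈ ℝ_{≥0}^K and every pair i ≠ j, the cross-partial ∂²V/∂q_i∂q_j (q) ≥ 0 (i.e., the sources are substitutes). -/

import Mathlib

/-!
Write `R(q) = (Σ⁻¹ + diag q)⁻¹`. Differentiating the inverse twice gives
`∂²V/∂qᵢ∂qⱼ = (αᵀR)ᵢ Rᵢⱼ (Rα)ⱼ + (αᵀR)ⱼ Rⱼᵢ (Rα)ᵢ`.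
For `q ≥ 0` the matrix `Σ⁻¹ + diag q` is positive definite with non-positive off-diagonal
entries, i.e. a non-singular M-matrix, so its inverse `R` is entrywise non-negative; since
`α > 0`, every factor above is non-negative.
-/

open Matrix Topology

theorem negPart_mul_posPart_eq_zero {R : Type*} [Ring R] [LinearOrder R] [IsOrderedRing R]
    (a : R) : a⁻ * a⁺ = 0 := by
  rcases le_total a 0 with h | h
  · rw [posPart_eq_zero.2 h, mul_zero]
  · rw [negPart_eq_zero.2 h, zero_mul]

namespace Matrix

variable {n : Type*} [Fintype n]

section ZMatrix

variable {R : Type*} [Field R] [LinearOrder R] [IsStrictOrderedRing R] [StarRing R]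
  [TrivialStar R]

/- Test `B x ≥ 0` against the negative part `x⁻`: since `x⁻` and `x⁺` have disjoint supports,
the cross term `x⁻ᵀ B x⁺` only sees off-diagonal entries, so `x⁻ᵀ B x⁻ ≤ 0` and `x⁻ = 0`. -/
theorem PosDef.nonneg_of_mulVec_nonneg {B : Matrix n n R} (hB : B.PosDef)
    (hZ : ∀ i j, i ≠ j → B i j ≤ 0) {x : n → R} (hx : 0 ≤ B *ᵥ x) : 0 ≤ x := by
  have hcross : x⁻ ⬝ᵥ B *ᵥ x⁺ ≤ 0 := by
    refine Finset.sum_nonpos fun k _ => ?_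
    rw [mulVec, dotProduct, Finset.mul_sum]
    refine Finset.sum_nonpos fun l _ => ?_
    rcases eq_or_ne k l with rfl | hkl
    · rw [mul_left_comm, Pi.negPart_apply, Pi.posPart_apply, negPart_mul_posPart_eq_zero,
        mul_zero]
    · exact mul_nonpos_of_nonneg_of_nonpos (negPart_nonneg _)
        (mul_nonpos_of_nonpos_of_nonneg (hZ k l hkl) (posPart_nonneg _))
  have hneg : x⁻ ⬝ᵥ B *ᵥ x⁻ ≤ 0 := by
    have h := dotProduct_nonneg_of_nonneg (negPart_nonneg x) hx
    nth_rw 2 [← posPart_sub_negPart x] at h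
    rw [mulVec_sub, dotProduct_sub] at h
    linarith
  have hzero : x⁻ = 0 := by
    by_contra h
    exact (hB.dotProduct_mulVec_pos h).not_ge (by rwa [star_trivial])
  rw [← posPart_sub_negPart x, hzero, sub_zero]
  exact posPart_nonneg x

variable [DecidableEq n]

theorem PosDef.inv_mulVec_nonneg {B : Matrix n n R} (hB : B.PosDef)
    (hZ : ∀ i j, i ≠ j → B i j ≤ 0) {b : n → R} (hb : 0 ≤ b) : 0 ≤ B⁻¹ *ᵥ b := by
  refine hB.nonneg_of_mulVec_nonneg hZ ?_
  rwa [mulVec_mulVec, mul_nonsing_inv _ ((isUnit_iff_isUnit_det B).mp hB.isUnit), one_mulVec]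

theorem PosDef.vecMul_inv_nonneg {B : Matrix n n R} (hB : B.PosDef)
    (hZ : ∀ i j, i ≠ j → B i j ≤ 0) {b : n → R} (hb : 0 ≤ b) : 0 ≤ b ᵥ* B⁻¹ := by
  rw [← mulVec_transpose, transpose_nonsing_inv]
  exact hB.transpose.inv_mulVec_nonneg (fun i j hij => hZ j i hij.symm) hb

theorem PosDef.inv_apply_nonneg {B : Matrix n n R} (hB : B.PosDef)
    (hZ : ∀ i j, i ≠ j → B i j ≤ 0) (i j : n) : 0 ≤ B⁻¹ i j := by
  simpa [mulVec_single_one] using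
    hB.inv_mulVec_nonneg hZ (Pi.single_nonneg.2 zero_le_one : 0 ≤ Pi.single j (1 : R)) i

end ZMatrix

variable [DecidableEq n]

theorem dotProduct_mul_diagonal_mul_mulVec {R : Type*} [CommSemiring R] (α β h : n → R)
    (M N : Matrix n n R) : α ⬝ᵥ (M * diagonal h * N) *ᵥ β = ((α ᵥ* M) * (N *ᵥ β)) ⬝ᵥ h := by
  rw [← mulVec_mulVec, ← mulVec_mulVec, dotProduct_mulVec]
  simp only [dotProduct, mulVec_diagonal, Pi.mul_apply]
  exact Finset.sum_congr rfl fun k _ => by ring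

noncomputable def dotProductMulVecCLM (α β : n → ℝ) : Matrix n n ℝ →L[ℝ] ℝ :=
  LinearMap.toContinuousLinearMap
    ((LinearMap.applyₗ β).comp ((LinearMap.applyₗ α).comp (toLinearMap₂' ℝ).toLinearMap))

@[simp]
theorem dotProductMulVecCLM_apply (α β : n → ℝ) (N : Matrix n n ℝ) :
    dotProductMulVecCLM α β N = α ⬝ᵥ N *ᵥ β :=
  toLinearMap₂'_apply' N α β

variable (A : Matrix n n ℝ) (α β : n → ℝ) {p : n → ℝ}

section InvAddDiagonal

attribute [local instance] Matrix.linftyOpNormedRing Matrix.linftyOpNormedAlgebra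

theorem isOpen_setOf_isUnit_add_diagonal : IsOpen {r : n → ℝ | IsUnit (A + diagonal r)} :=
  Units.isOpen.preimage (f := fun r => A + diagonal r)
    (continuous_const.add continuous_id.matrix_diagonal)

theorem hasFDerivAt_inv_add_diagonal (hp : IsUnit (A + diagonal p)) :
    HasFDerivAt (fun r => (A + diagonal r)⁻¹)
      ((-ContinuousLinearMap.mulLeftRight ℝ _ (A + diagonal p)⁻¹ (A + diagonal p)⁻¹).comp
        (diagonalLinearMap n ℝ ℝ).toContinuousLinearMap) p := by
  obtain ⟨u, hu⟩ := hp
  have hinv : HasFDerivAt Ring.inverse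
      (-ContinuousLinearMap.mulLeftRight ℝ _ (A + diagonal p)⁻¹ (A + diagonal p)⁻¹)
      (A + diagonal p) := by
    rw [← hu, ← coe_units_inv]
    exact hasFDerivAt_ringInverse u
  have hdiag : HasFDerivAt (fun r => A + diagonal r)
      (diagonalLinearMap n ℝ ℝ).toContinuousLinearMap p :=
    (diagonalLinearMap n ℝ ℝ).toContinuousLinearMap.hasFDerivAt.const_add A
  have hfun : (fun r => (A + diagonal r)⁻¹) = Ring.inverse ∘ fun r => A + diagonal r :=
    funext fun _ => nonsing_inv_eq_ringInverse _
  rw [hfun]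
  exact hinv.comp p hdiag

theorem hasFDerivAt_dotProduct_inv_add_diagonal_mulVec (hp : IsUnit (A + diagonal p)) :
    HasFDerivAt (fun r => α ⬝ᵥ (A + diagonal r)⁻¹ *ᵥ β)
      ((dotProductMulVecCLM α β).comp
        ((-ContinuousLinearMap.mulLeftRight ℝ _ (A + diagonal p)⁻¹ (A + diagonal p)⁻¹).comp
          (diagonalLinearMap n ℝ ℝ).toContinuousLinearMap)) p :=
  ((dotProductMulVecCLM α β).hasFDerivAt.comp p
    (hasFDerivAt_inv_add_diagonal A hp)).congr_of_eventuallyEq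
    (.of_forall fun _ => (dotProductMulVecCLM_apply α β _).symm)

end InvAddDiagonal

theorem differentiableAt_dotProduct_inv_add_diagonal_mulVec (hp : IsUnit (A + diagonal p)) :
    DifferentiableAt ℝ (fun r => α ⬝ᵥ (A + diagonal r)⁻¹ *ᵥ β) p :=
  (hasFDerivAt_dotProduct_inv_add_diagonal_mulVec A α β hp).differentiableAt

theorem fderiv_dotProduct_inv_add_diagonal_mulVec (hp : IsUnit (A + diagonal p)) (h : n → ℝ) :
    fderiv ℝ (fun r => α ⬝ᵥ (A + diagonal r)⁻¹ *ᵥ β) p h =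
      -(((α ᵥ* (A + diagonal p)⁻¹) * ((A + diagonal p)⁻¹ *ᵥ β)) ⬝ᵥ h) := by
  rw [(hasFDerivAt_dotProduct_inv_add_diagonal_mulVec A α β hp).fderiv]
  change dotProductMulVecCLM α β (-((A + diagonal p)⁻¹ * diagonal h * (A + diagonal p)⁻¹)) = _
  rw [dotProductMulVecCLM_apply, neg_mulVec, dotProduct_neg, dotProduct_mul_diagonal_mul_mulVec]

theorem fderiv_fderiv_dotProduct_inv_add_diagonal_mulVec (hp : IsUnit (A + diagonal p))
    (i j : n) :
    fderiv ℝ (fun r => fderiv ℝ (fun s => α ⬝ᵥ (A + diagonal s)⁻¹ *ᵥ β) r (Pi.single i 1)) p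
        (Pi.single j 1) =
      (α ᵥ* (A + diagonal p)⁻¹) i * (A + diagonal p)⁻¹ i j * ((A + diagonal p)⁻¹ *ᵥ β) j +
        (α ᵥ* (A + diagonal p)⁻¹) j * (A + diagonal p)⁻¹ j i * ((A + diagonal p)⁻¹ *ᵥ β) i := by
  have hfirst : (fun r => fderiv ℝ (fun s => α ⬝ᵥ (A + diagonal s)⁻¹ *ᵥ β) r (Pi.single i 1))
      =ᶠ[𝓝 p] fun r => -((α ⬝ᵥ (A + diagonal r)⁻¹ *ᵥ Pi.single i 1) *
        (Pi.single i 1 ⬝ᵥ (A + diagonal r)⁻¹ *ᵥ β)) :=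
    Filter.eventually_of_mem ((isOpen_setOf_isUnit_add_diagonal A).mem_nhds hp) fun r hr => by
      dsimp only
      rw [fderiv_dotProduct_inv_add_diagonal_mulVec A α β hr, dotProduct_single_one,
        Pi.mul_apply, dotProduct_mulVec, dotProduct_single_one, single_one_dotProduct]
  have hleft := fderiv_dotProduct_inv_add_diagonal_mulVec A α (Pi.single i 1) hp (Pi.single j 1)
  have hright := fderiv_dotProduct_inv_add_diagonal_mulVec A (Pi.single i 1) β hp (Pi.single j 1)
  rw [dotProduct_single_one, Pi.mul_apply, mulVec_single_one, col_apply] at hleft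
  rw [dotProduct_single_one, Pi.mul_apply, single_one_vecMul, row_apply] at hright
  rw [hfirst.fderiv_eq, fderiv_fun_neg,
    fderiv_fun_mul (differentiableAt_dotProduct_inv_add_diagonal_mulVec A _ _ hp)
      (differentiableAt_dotProduct_inv_add_diagonal_mulVec A _ _ hp),
    _root_.neg_apply, _root_.add_apply, _root_.smul_apply, _root_.smul_apply, hleft, hright,
    dotProduct_mulVec, dotProduct_single_one, single_one_dotProduct, smul_eq_mul, smul_eq_mul]
  ring

end Matrix

theorem stmt_7_general {K : ℕ} (S : Matrix (Fin K) (Fin K) ℝ) (hS : S.PosDef)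
    (hM : ∀ i j, i ≠ j → S⁻¹ i j ≤ 0)
    (α : Fin K → ℝ) (hα : ∀ i, 0 < α i)
    (q : Fin K → ℝ) (hq : ∀ i, 0 ≤ q i) (i j : Fin K) :
    0 ≤ fderiv ℝ
        (fun p : Fin K → ℝ =>
          fderiv ℝ (fun r : Fin K → ℝ => α ⬝ᵥ ((S⁻¹ + diagonal r)⁻¹ *ᵥ α)) p
            (Pi.single i 1))
        q (Pi.single j 1) := by
  have hB : (S⁻¹ + diagonal q).PosDef := hS.inv.add_posSemidef (PosSemidef.diagonal hq)
  have hZ : ∀ k l, k ≠ l → (S⁻¹ + diagonal q) k l ≤ 0 := fun k l hkl => by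
    simpa [diagonal_apply_ne _ hkl] using hM k l hkl
  have hα' : 0 ≤ α := fun k => (hα k).le
  have hu := hB.vecMul_inv_nonneg hZ hα'
  have hv := hB.inv_mulVec_nonneg hZ hα'
  have hR := hB.inv_apply_nonneg hZ
  rw [fderiv_fderiv_dotProduct_inv_add_diagonal_mulVec _ α α hB.isUnit]
  exact add_nonneg (mul_nonneg (mul_nonneg (hu i) (hR i j)) (hv j))
    (mul_nonneg (mul_nonneg (hu j) (hR j i)) (hv i))

theorem stmt_7 {K : ℕ} (S : Matrix (Fin K) (Fin K) ℝ) (hS : S.PosDef)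
    (hM : ∀ i j, i ≠ j → S⁻¹ i j ≤ 0)
    (α : Fin K → ℝ) (hα : ∀ i, 0 < α i)
    (q : Fin K → ℝ) (hq : ∀ i, 0 ≤ q i) (i j : Fin K) (hij : i ≠ j) :
    0 ≤ fderiv ℝ
        (fun p : Fin K → ℝ =>
          fderiv ℝ (fun r : Fin K → ℝ => α ⬝ᵥ ((S⁻¹ + diagonal r)⁻¹ *ᵥ α)) p
            (Pi.single i 1))
        q (Pi.single j 1) :=
  stmt_7_general S hS hM α hα q hq i j
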